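/- Assume the Moran structure satisfies condition (H). Then there exists a constant C > 0 such that for all geodesic rays ξ = (u_n)_{n≥0} and η = (v_n)_{n≥0} of the induced augmented tree with Φ(ξ) ≠ Φ(η), one has C^{-1}·|Φ(ξ) − Φ(η)| ≤ r^{t(ξ,η)} ≤ C·|Φ(ξ) − Φ(η)|, where t(ξ,η) = liminf_n ⟨u_n, v_n⟩. -/

import Mathlib

open Metric Set Filter

attribute [local instance] Classical.propDecidable

noncomputable section

namespace MoranPaper

/-- Points of `ℝ^d`. -/
abbrev Pt (d : ℕ) := EuclideanSpace ℝ (Fin d)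

/-- `w` is an admissible word: the letter at (0-indexed) position `j`
(corresponding to step `j+1`) lies in `[1, n j]`, where `n j` encodes `n_{j+1}`. -/
def IsWord (n : ℕ → ℕ) (w : List ℕ) : Prop :=
  ∀ j (h : j < w.length), 1 ≤ w.get ⟨j, h⟩ ∧ w.get ⟨j, h⟩ ≤ n j

/-- The set `D_k` of words of length `k`. -/
def WordsLen (n : ℕ → ℕ) (k : ℕ) : Set (List ℕ) := {w | IsWord n w ∧ w.length = k}

/-- A Moran structure on the data `(J, (n_k), (r_k))`:  a family of sets `J_w`
indexed by words, with `J_∅ = J`, each `J_w` a similar copy of `J`, children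
contained in the parent with pairwise disjoint interiors, and prescribed
diameter ratios. -/
structure MoranStructure (d : ℕ) (J : Set (Pt d)) (n : ℕ → ℕ) (r : ℕ → ℝ) where
  Jset : List ℕ → Set (Pt d)
  root_eq : Jset [] = J
  similar : ∀ w, IsWord n w → ∃ (S : Pt d → Pt d) (c : ℝ), 0 < c ∧
      (∀ x y, dist (S x) (S y) = c * dist x y) ∧ Jset w = S '' J
  nested : ∀ w, IsWord n w → ∀ a, 1 ≤ a → a ≤ n w.length →
      Jset (w ++ [a]) ⊆ Jset w
  disjoint_int : ∀ w, IsWord n w → ∀ a b, 1 ≤ a → a ≤ n w.length →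
      1 ≤ b → b ≤ n w.length → a ≠ b →
      interior (Jset (w ++ [a])) ∩ interior (Jset (w ++ [b])) = ∅
  diam_ratio : ∀ w, IsWord n w → ∀ a, 1 ≤ a → a ≤ n w.length →
      Metric.diam (Jset (w ++ [a])) = r w.length * Metric.diam (Jset w)

/-- Standing hypotheses on the Moran data; `R` plays the role of `r = inf_k r_k > 0`. -/
structure MoranData (d : ℕ) (J : Set (Pt d)) (n : ℕ → ℕ) (r : ℕ → ℝ) (R : ℝ) : Prop where
  dim_pos : 1 ≤ d
  compact : IsCompact J
  int_nonempty : (interior J).Nonempty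
  two_le : ∀ k, 2 ≤ n k
  r_pos : ∀ k, 0 < r k
  r_lt_one : ∀ k, r k < 1
  nr_le : ∀ k, (n k : ℝ) * r k ≤ 1
  R_pos : 0 < R
  R_inf : R = ⨅ k, r k

/-- The Moran set `E = ⋂_k ⋃_{w ∈ D_k} J_w`. -/
def MoranSet {d : ℕ} {J : Set (Pt d)} {n : ℕ → ℕ} {r : ℕ → ℝ}
    (M : MoranStructure d J n r) : Set (Pt d) :=
  ⋂ k, ⋃ w ∈ WordsLen n k, M.Jset w

/-- The product `r_1 ⋯ r_k`. -/
def prodR (r : ℕ → ℝ) (k : ℕ) : ℝ := ∏ j ∈ Finset.range k, r j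

/-- The level `X_m`:  `X_0 = {∅}`, and for `m ≥ 1`,
`X_m = {w : r_1⋯r_k ≤ R^m < r_1⋯r_{k-1}}` where `k` is the length of `w`. -/
def XLevel (n : ℕ → ℕ) (r : ℕ → ℝ) (R : ℝ) (m : ℕ) : Set (List ℕ) :=
  if m = 0 then {([] : List ℕ)}
  else {w | IsWord n w ∧ prodR r w.length ≤ R ^ m ∧ R ^ m < prodR r (w.length - 1)}

/-- The vertex set `X = ⋃_m X_m`. -/
def XV (n : ℕ → ℕ) (r : ℕ → ℝ) (R : ℝ) : Set (List ℕ) := ⋃ m, XLevel n r R m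

/-- `v` is the parent (first ancestor) of `u`:  `v` is the initial segment
of `u` lying one level above `u`. -/
def IsParent (n : ℕ → ℕ) (r : ℕ → ℝ) (R : ℝ) (v u : List ℕ) : Prop :=
  v ≠ u ∧ v <+: u ∧ ∃ m, 1 ≤ m ∧ u ∈ XLevel n r R m ∧ v ∈ XLevel n r R (m - 1)

/-- Vertical edge relation `𝔈_v` (as an unordered relation). -/
def Evert (n : ℕ → ℕ) (r : ℕ → ℝ) (R : ℝ) (u v : List ℕ) : Prop :=
  IsParent n r R u v ∨ IsParent n r R v u

variable {d : ℕ} {J : Set (Pt d)} {n : ℕ → ℕ} {r : ℕ → ℝ}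

/-- Horizontal edge relation `𝔈_h`: distinct words on a common level `X_m`, `m ≥ 1`,
whose Moran pieces intersect. -/
def Ehor (M : MoranStructure d J n r) (R : ℝ) (u v : List ℕ) : Prop :=
  u ≠ v ∧ ∃ m, 1 ≤ m ∧ u ∈ XLevel n r R m ∧ v ∈ XLevel n r R m ∧
    (M.Jset u ∩ M.Jset v).Nonempty

/-- The induced augmented tree `(X, 𝔈)`, `𝔈 = 𝔈_v ∪ 𝔈_h`, as a graph on all words
(words outside `X` are isolated vertices). -/
def AugGraph (M : MoranStructure d J n r) (R : ℝ) : SimpleGraph (List ℕ) where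
  Adj u v := Evert n r R u v ∨ Ehor M R u v
  symm := ⟨by
    rintro u v (h | ⟨hne, m, hm, hu, hv, hJ⟩)
    · exact Or.inl h.symm
    · exact Or.inr ⟨hne.symm, m, hm, hv, hu, by rwa [Set.inter_comm]⟩⟩
  loopless := ⟨by
    rintro u ((⟨h, -⟩ | ⟨h, -⟩) | ⟨h, -⟩) <;> exact h rfl⟩

/-- The tree `(X, 𝔈_v)` with only the vertical edges. -/
def TreeGraph (n : ℕ → ℕ) (r : ℕ → ℝ) (R : ℝ) : SimpleGraph (List ℕ) where
  Adj u v := Evert n r R u v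
  symm := ⟨fun _ _ h => h.symm⟩
  loopless := ⟨by rintro u (⟨h, -⟩ | ⟨h, -⟩) <;> exact h rfl⟩

/-- The graph `(X, 𝔈_h)` with only the horizontal edges. -/
def HorGraph (M : MoranStructure d J n r) (R : ℝ) : SimpleGraph (List ℕ) where
  Adj u v := Ehor M R u v
  symm := ⟨by
    rintro u v ⟨hne, m, hm, hu, hv, hJ⟩
    exact ⟨hne.symm, m, hm, hv, hu, by rwa [Set.inter_comm]⟩⟩
  loopless := ⟨by rintro u ⟨h, -⟩; exact h rfl⟩

/-- Gromov product `⟨x,y⟩ = (d(o,x) + d(o,y) - d(x,y))/2` with respect to a base point `o`. -/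
def gromovD {V : Type*} (G : SimpleGraph V) (o x y : V) : ℝ :=
  ((G.dist o x : ℝ) + (G.dist o y : ℝ) - (G.dist x y : ℝ)) / 2

/-- Condition (H): there is `C' > 0` such that on every level `X_m` (`m ≥ 1`),
two pieces either intersect or are at distance at least `C' R^m`. -/
def CondH (M : MoranStructure d J n r) (R : ℝ) : Prop :=
  ∃ C' : ℝ, 0 < C' ∧ ∀ m, 1 ≤ m → ∀ u ∈ XLevel n r R m, ∀ v ∈ XLevel n r R m,
    (M.Jset u ∩ M.Jset v).Nonempty ∨
    ∀ p ∈ M.Jset u, ∀ q ∈ M.Jset v, C' * R ^ m ≤ dist p q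

/-- `T` is a horizontal connected component: a maximal subset of some level `X_m`
which is connected in the horizontal graph. -/
def IsHCC (M : MoranStructure d J n r) (R : ℝ) (T : Set (List ℕ)) : Prop :=
  ∃ m, T ⊆ XLevel n r R m ∧ ((HorGraph M R).induce T).Connected ∧
    ∀ T', T ⊆ T' → T' ⊆ XLevel n r R m → ((HorGraph M R).induce T').Connected → T' = T

/-- The common suffix set `Σ_m` of the level `X_m`: words `w` with `uw ∈ X_{m+1}`
for (some, equivalently all) `u ∈ X_m`. -/
def SigmaSet (n : ℕ → ℕ) (r : ℕ → ℝ) (R : ℝ) (m : ℕ) : Set (List ℕ) :=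
  {w | ∃ u ∈ XLevel n r R m, u ++ w ∈ XLevel n r R (m + 1)}

/-- The offspring set `TΣ_m ⊆ X_{m+1}` of a set `T ⊆ X_m`. -/
def TSigma (n : ℕ → ℕ) (r : ℕ → ℝ) (R : ℝ) (m : ℕ) (T : Set (List ℕ)) : Set (List ℕ) :=
  {x | ∃ u ∈ T, ∃ w ∈ SigmaSet n r R m, x = u ++ w}

/-- The augmented tree is rearrangeable:  horizontal connected components have
uniformly bounded cardinality, and for every horizontal connected component `T ⊆ X_m`
with `#T = b`, the offspring set `TΣ_m` can be partitioned into `b` groups (indexed by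
the elements of `T`), each group being a union of horizontal connected components and
having exactly `#Σ_m` elements. -/
def Rearrangeable (M : MoranStructure d J n r) (R : ℝ) : Prop :=
  (∃ L : ℕ, ∀ T, IsHCC M R T → T.Finite ∧ T.ncard ≤ L) ∧
  ∀ m T, T ⊆ XLevel n r R m → IsHCC M R T →
    ∃ g : List ℕ → List ℕ,
      (∀ x ∈ TSigma n r R m T, g x ∈ T) ∧
      (∀ Z, IsHCC M R Z → Z ⊆ TSigma n r R m T → ∀ x ∈ Z, ∀ y ∈ Z, g x = g y) ∧
      (∀ i ∈ T, {x ∈ TSigma n r R m T | g x = i}.ncard = (SigmaSet n r R m).ncard)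

/-- `C` is a (topological) connected component of `A`. -/
def IsRelCC {α : Type*} [TopologicalSpace α] (C A : Set α) : Prop :=
  ∃ x ∈ A, C = connectedComponentIn A x

/-- Condition (v): there is `L` such that any `T ⊆ D_{k-1}` for which `⋃_{i∈T} J_i`
is a connected component of `⋃_{i∈D_{k-1}} J_i` satisfies `#T ≤ L`. -/
def CondV (M : MoranStructure d J n r) : Prop :=
  ∃ L : ℕ, ∀ k, 1 ≤ k → ∀ T ⊆ WordsLen n (k - 1),
    IsRelCC (⋃ i ∈ T, M.Jset i) (⋃ i ∈ WordsLen n (k - 1), M.Jset i) →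
    T.Finite ∧ T.ncard ≤ L

/-- Condition (vi): for any such `T` (with `#T = b`), the connected components of
`⋃_{i∈T} ⋃_{j=1}^{n_k} J_{ij}` can be partitioned into `b` groups (indexed by the
elements of `T`) so that the union of the components in each group is a union of
exactly `n_k` of the sets `J_{ij}`. -/
def CondVI (M : MoranStructure d J n r) : Prop :=
  ∀ k, 1 ≤ k → ∀ T ⊆ WordsLen n (k - 1),
    IsRelCC (⋃ i ∈ T, M.Jset i) (⋃ i ∈ WordsLen n (k - 1), M.Jset i) →
    ∃ f : Set (Pt d) → List ℕ,
      (∀ C, IsRelCC C (⋃ u ∈ T, ⋃ j ∈ Set.Icc 1 (n (k - 1)), M.Jset (u ++ [j])) → f C ∈ T) ∧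
      ∀ i ∈ T, ∃ W : Finset (List ℕ × ℕ),
        (∀ p ∈ W, p.1 ∈ T ∧ 1 ≤ p.2 ∧ p.2 ≤ n (k - 1)) ∧
        W.card = n (k - 1) ∧
        (⋃ C ∈ {C | IsRelCC C (⋃ u ∈ T, ⋃ j ∈ Set.Icc 1 (n (k - 1)), M.Jset (u ++ [j]))
            ∧ f C = i}, C)
          = ⋃ p ∈ W, M.Jset (p.1 ++ [p.2])

/-- A geodesic ray of the induced augmented tree: `u_m ∈ X_m` and `u_m = (u_{m+1})⁻¹`. -/
def IsRay (n : ℕ → ℕ) (r : ℕ → ℝ) (R : ℝ) (u : ℕ → List ℕ) : Prop :=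
  (∀ m, u m ∈ XLevel n r R m) ∧ ∀ m, IsParent n r R (u m) (u (m + 1))

/-- Geodesic rays as a type. -/
def MRay (n : ℕ → ℕ) (r : ℕ → ℝ) (R : ℝ) := {u : ℕ → List ℕ // IsRay n r R u}

/-- `t(ξ,η) = liminf_m ⟨u_m, v_m⟩`, valued in `EReal`. -/
def tLim {V : Type*} (G : SimpleGraph V) (o : V) (u v : ℕ → V) : EReal :=
  Filter.liminf (fun m => ((gromovD G o (u m) (v m) : ℝ) : EReal)) Filter.atTop

/-- `R ^ t` for `t ∈ EReal`, with the convention `R ^ ∞ = 0`. -/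
def rpowE (R : ℝ) (t : EReal) : ℝ := if t = ⊤ then 0 else R ^ t.toReal

/-- The hyperbolic boundary of the induced augmented tree: equivalence classes of
geodesic rays, two rays being equivalent when `t(ξ,η) = ∞`. -/
def MBoundary (M : MoranStructure d J n r) (R : ℝ) :=
  Quot (fun ξ η : MRay n r R => tLim (AugGraph M R) [] ξ.1 η.1 = ⊤)

/-- The class of a ray in the hyperbolic boundary. -/
def mkB (M : MoranStructure d J n r) (R : ℝ) (ξ : MRay n r R) : MBoundary M R :=
  Quot.mk _ ξ

/-- The metric `ρ_a` on the hyperbolic boundary: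
`ρ_a(ξ̄,η̄) = exp(-a · inf{t(ξ,η) : ξ ∈ ξ̄, η ∈ η̄})` for distinct classes, and `0` otherwise. -/
def mrho (M : MoranStructure d J n r) (R a : ℝ) (p q : MBoundary M R) : ℝ :=
  if p = q then 0
  else Real.exp (-a * (sInf {s : EReal | ∃ ξ η : MRay n r R,
    mkB M R ξ = p ∧ mkB M R η = q ∧ s = tLim (AugGraph M R) [] ξ.1 η.1}).toReal)

/-- An abstract augmented tree in the sense of Kaimanovich: a rooted tree (encoded
by a parent map and a level function) together with a symmetric horizontal edge
relation `Eh` joining distinct vertices of a common level whose parents are equal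
or horizontally joined. -/
structure AugmentedTree (V : Type*) where
  root : V
  parent : V → V
  lvl : V → ℕ
  lvl_root : lvl root = 0
  lvl_parent : ∀ x, x ≠ root → lvl (parent x) + 1 = lvl x
  Eh : V → V → Prop
  Eh_symm : ∀ x y, Eh x y → Eh y x
  Eh_ne : ∀ x y, Eh x y → x ≠ y
  Eh_lvl : ∀ x y, Eh x y → lvl x = lvl y
  Eh_parent : ∀ x y, Eh x y → parent x = parent y ∨ Eh (parent x) (parent y)

namespace AugmentedTree

variable {V : Type*} (T : AugmentedTree V)

/-- The vertical (tree) edge relation. -/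
def Ev (x y : V) : Prop :=
  (x ≠ T.root ∧ T.parent x = y) ∨ (y ≠ T.root ∧ T.parent y = x)

/-- The graph `(X, 𝔈)`, `𝔈 = 𝔈_v ∪ 𝔈_h`. -/
def graph : SimpleGraph V where
  Adj x y := x ≠ y ∧ (T.Ev x y ∨ T.Eh x y)
  symm := ⟨by
    rintro x y ⟨hne, h | h⟩
    · exact ⟨hne.symm, Or.inl h.symm⟩
    · exact ⟨hne.symm, Or.inr (T.Eh_symm x y h)⟩⟩
  loopless := ⟨fun _ h => h.1 rfl⟩

/-- Gromov product `⟨x,y⟩ = (|x| + |y| - d(x,y))/2` (one has `d(o,x) = |x| = lvl x`). -/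
def gromov (x y : V) : ℝ :=
  ((T.lvl x : ℝ) + (T.lvl y : ℝ) - (T.graph.dist x y : ℝ)) / 2

/-- Gromov hyperbolicity. -/
def Hyperbolic : Prop :=
  ∃ δ : ℝ, 0 ≤ δ ∧ ∀ x y z : V,
    min (T.gromov x z) (T.gromov z y) - δ ≤ T.gromov x y

/-- A geodesic ray from the root: `x_0 = o` and `x_m = (x_{m+1})⁻¹`. -/
def IsRayT (x : ℕ → V) : Prop := x 0 = T.root ∧ ∀ m, T.parent (x (m + 1)) = x m

/-- Geodesic rays from the root, as a type. -/
def Ray := {x : ℕ → V // T.IsRayT x}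

/-- `t(ξ,η) = liminf_m ⟨x_m, y_m⟩`, valued in `EReal`. -/
def tvalT (ξ η : T.Ray) : EReal :=
  Filter.liminf (fun m => ((T.gromov (ξ.1 m) (η.1 m) : ℝ) : EReal)) Filter.atTop

/-- The hyperbolic boundary: classes of geodesic rays, two rays being equivalent
when `t(ξ,η) = ∞`. -/
def Boundary := Quot (fun ξ η : T.Ray => T.tvalT ξ η = ⊤)

/-- The class of a ray in the boundary. -/
def mkBd (ξ : T.Ray) : T.Boundary := Quot.mk _ ξ

/-- The metric `ρ_a` on the hyperbolic boundary. -/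
def rho (a : ℝ) (p q : T.Boundary) : ℝ :=
  if p = q then 0
  else Real.exp (-a * (sInf {s : EReal | ∃ ξ η : T.Ray,
    T.mkBd ξ = p ∧ T.mkBd η = q ∧ s = T.tvalT ξ η}).toReal)

end AugmentedTree

end MoranPaper

end

/-!
Every vertex `w ∈ X_m` carries a piece `J_w` of diameter at most `diam J · R^m`, and adjacent
pieces meet. Along a geodesic of length `ℓ` from `u_m` to `v_m` the `i`-th vertex has level at
least `max (m - i) (m - ℓ + i)`, so chaining the pieces from `x` to `y` gives
`|x - y| ≲ R^(m - ℓ/2) = R^⟨u_m, v_m⟩` for every `m`, hence `|x - y| ≲ R^t`.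
Conversely, let `s` be the first level at which the two rays are at graph distance at least `2`.
Since they are linked at level `s - 1`, `⟨u_m, v_m⟩ ≥ s - 3/2` for all `m ≥ s - 1`, so
`t ≥ s - 3/2`; and at level `s` the pieces are disjoint, so (H) gives `|x - y| ≥ C' R^s`.
-/

theorem EReal.exists_liminf_coe_eq {g : ℕ → ℝ} {α β : ℝ} (hβ : ∀ m, g m ≤ β)
    (hα : ∀ᶠ m in atTop, α ≤ g m) :
    ∃ τ : ℝ, liminf (fun m => (g m : EReal)) atTop = τ ∧ α ≤ τ ∧ τ ≤ β := by
  have hle : liminf (fun m => (g m : EReal)) atTop ≤ β :=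
    (liminf_le_liminf (.of_forall fun m => EReal.coe_le_coe (hβ m))).trans_eq (liminf_const _)
  have hge : (α : EReal) ≤ liminf (fun m => (g m : EReal)) atTop :=
    (liminf_const _).symm.trans_le (liminf_le_liminf (hα.mono fun m hm => EReal.coe_le_coe hm))
  lift liminf (fun m => (g m : EReal)) atTop to ℝ using
    ⟨(hle.trans_lt (EReal.coe_lt_top β)).ne, (hge.trans_lt' (EReal.bot_lt_coe α)).ne'⟩
    with τ hτ
  exact ⟨τ, rfl, EReal.coe_le_coe_iff.1 hge, EReal.coe_le_coe_iff.1 hle⟩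

section Chains

open SimpleGraph Walk

theorem chain_step_le {R D e : ℝ} {p c : ℕ} (hR0 : 0 < R) (hR1 : R < 1) (hD : 0 ≤ D)
    (hc : c ≤ p + 1) (hp : p ≤ c + 1) (hE : R ^ p ≤ R ^ e) :
    (2 - R) * D * R ^ p + 2 * D * R ^ (e + ((c : ℝ) - p + 1) / 2) ≤
      2 * D * R ^ e + D * R ^ c := by
  have hDE := mul_nonneg hD (sub_nonneg.2 hE)
  rcases (by omega : c + 1 = p ∨ c = p ∨ c = p + 1) with rfl | rfl | rfl
  · rw [show e + ((c : ℝ) - (c + 1 : ℕ) + 1) / 2 = e by push_cast; ring, pow_succ]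
    nlinarith [mul_nonneg (mul_nonneg hD (pow_pos hR0 c).le) (sq_nonneg (1 - R))]
  · set s := R ^ (1 / 2 : ℝ)
    have hs2 : s * s = R := by rw [← Real.rpow_add hR0]; norm_num
    have hs1 : s ≤ 1 := Real.rpow_le_one hR0.le hR1.le (by norm_num)
    rw [show e + ((c : ℝ) - c + 1) / 2 = e + 1 / 2 by ring, Real.rpow_add hR0]
    have key : (2 - s * s) * D * R ^ c + 2 * D * (R ^ e * s) ≤ 2 * D * R ^ e + D * R ^ c := by
      nlinarith [mul_nonneg hDE (sub_nonneg.2 hs1), mul_nonneg (mul_nonneg hD (pow_pos hR0 c).le)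
        (mul_nonneg (sub_nonneg.2 hs1) (sub_nonneg.2 hs1))]
    rwa [hs2] at key
  · rw [show e + (((p + 1 : ℕ) : ℝ) - p + 1) / 2 = e + 1 by push_cast; ring, Real.rpow_add hR0,
      Real.rpow_one, pow_succ]
    nlinarith [mul_nonneg hDE (sub_nonneg.2 hR1.le)]

variable {V X : Type*} [PseudoMetricSpace X] {G : SimpleGraph V} {lev : V → ℕ}

theorem SimpleGraph.Walk.lev_le_add_length (hlev : ∀ a b, G.Adj a b → lev b ≤ lev a + 1)
    {a b : V} (W : G.Walk a b) : lev b ≤ lev a + W.length := by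
  induction W with
  | nil => simp
  | cons h W ih => have := hlev _ _ h; rw [length_cons]; omega

/-- The term `D * R ^ lev a` on the left pays for the steps of the walk that climb to a lower
level; with it the bound survives induction along the walk. -/
theorem dist_le_of_walk_of_pieces {P : V → Set X} {S : Set V} {D R : ℝ} (hR0 : 0 < R)
    (hR1 : R < 1) (hD : 0 ≤ D) (hlev : ∀ a b, G.Adj a b → lev b ≤ lev a + 1)
    (hS : ∀ a b, G.Adj a b → a ∈ S) (hP : ∀ a b, G.Adj a b → (P a ∩ P b).Nonempty)
    (hdiam : ∀ a ∈ S, ∀ x ∈ P a, ∀ y ∈ P a, dist x y ≤ D * R ^ lev a)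
    {a b : V} (W : G.Walk a b) (ha : a ∈ S) {x y : X} (hx : x ∈ P a) (hy : y ∈ P b) :
    (1 - R) * dist x y + D * R ^ lev a ≤
      2 * D * R ^ (((lev a : ℝ) + lev b - W.length) / 2) := by
  induction W generalizing x with
  | @nil a =>
    have hxy := hdiam _ ha x hx y hy
    rw [length_nil, Nat.cast_zero, sub_zero, add_self_div_two, Real.rpow_natCast]
    nlinarith [mul_le_mul_of_nonneg_left hxy (sub_nonneg.2 hR1.le),
      mul_nonneg hR0.le (mul_nonneg hD (pow_pos hR0 (lev a)).le)]
  | @cons a c b h W ih =>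
    obtain ⟨z, hza, hzc⟩ := hP _ _ h
    have hxz := mul_le_mul_of_nonneg_left (hdiam _ ha x hx z hza) (sub_nonneg.2 hR1.le)
    have htri := mul_le_mul_of_nonneg_left (dist_triangle x z y) (sub_nonneg.2 hR1.le)
    have hzy := ih (hS _ _ h.symm) hzc hy
    set e : ℝ := ((lev a : ℝ) + lev b - (cons h W).length) / 2
    have hE : R ^ lev a ≤ R ^ e := by
      have : (lev b : ℝ) ≤ lev a + (W.length + 1) := by
        exact_mod_cast lev_le_add_length hlev (cons h W)
      rw [← Real.rpow_natCast]
      refine Real.rpow_le_rpow_of_exponent_ge hR0 hR1.le ?_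
      simp only [e, length_cons]; push_cast; linarith
    have hstep := chain_step_le hR0 hR1 hD (hlev _ _ h) (hlev _ _ h.symm) hE
    rw [show e + ((lev c : ℝ) - lev a + 1) / 2 = ((lev c : ℝ) + lev b - W.length) / 2 by
      simp only [e, length_cons]; push_cast; ring] at hstep
    nlinarith

end Chains

namespace MoranPaper

variable {d : ℕ} {J : Set (Pt d)} {n : ℕ → ℕ} {r : ℕ → ℝ} {R : ℝ}

theorem IsWord.of_prefix {w v : List ℕ} (hw : IsWord n w) (h : v <+: w) : IsWord n v := by
  intro j hj
  simpa [List.get_eq_getElem, h.getElem hj] using hw j (hj.trans_le h.length_le)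

theorem IsWord.last_bounds {w : List ℕ} {a : ℕ} (hw : IsWord n (w ++ [a])) :
    1 ≤ a ∧ a ≤ n w.length := by
  simpa [List.get_eq_getElem] using hw w.length (by simp)

namespace MoranData

variable (hD : MoranData d J n r R)
include hD

theorem prodR_pos (k : ℕ) : 0 < prodR r k :=
  Finset.prod_pos fun j _ => hD.r_pos j

theorem R_le (k : ℕ) : R ≤ r k :=
  hD.R_inf ▸ ciInf_le ⟨0, by rintro _ ⟨j, rfl⟩; exact (hD.r_pos j).le⟩ k

theorem R_lt_one : R < 1 := (hD.R_le 0).trans_lt (hD.r_lt_one 0)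

theorem le_of_mem_XLevel {w : List ℕ} {m m' : ℕ} (h : w ∈ XLevel n r R m)
    (h' : w ∈ XLevel n r R m') : m' ≤ m := by
  rcases Nat.eq_zero_or_pos m' with rfl | hm'
  · exact Nat.zero_le m
  simp only [XLevel, hm'.ne', if_false, Set.mem_ofPred_eq] at h'
  obtain ⟨-, hle, -⟩ := h'
  rcases w.eq_nil_or_concat with rfl | ⟨v, a, rfl⟩
  · simp only [List.length_nil, prodR, Finset.range_zero, Finset.prod_empty] at hle
    exact absurd hle (pow_lt_one₀ hD.R_pos.le hD.R_lt_one hm'.ne').not_ge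
  rcases Nat.eq_zero_or_pos m with rfl | hm
  · simp [XLevel] at h
  simp only [XLevel, hm.ne', if_false, Set.mem_ofPred_eq, List.length_concat,
    Nat.add_sub_cancel] at h hle
  have hlt : R ^ (m + 1) < R ^ m' := by
    calc R ^ (m + 1) = R ^ m * R := pow_succ R m
      _ < prodR r v.length * r v.length :=
        mul_lt_mul h.2.2 (hD.R_le _) hD.R_pos (hD.prodR_pos _).le
      _ ≤ R ^ m' := by rwa [prodR, Finset.prod_range_succ] at hle
  have := (pow_lt_pow_iff_right_of_lt_one₀ hD.R_pos hD.R_lt_one).1 hlt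
  omega

theorem eq_of_mem_XLevel {w : List ℕ} {m m' : ℕ} (h : w ∈ XLevel n r R m)
    (h' : w ∈ XLevel n r R m') : m = m' :=
  le_antisymm (hD.le_of_mem_XLevel h' h) (hD.le_of_mem_XLevel h h')

end MoranData

theorem isWord_of_mem_XLevel {w : List ℕ} {m : ℕ} (h : w ∈ XLevel n r R m) : IsWord n w := by
  rcases Nat.eq_zero_or_pos m with rfl | hm
  · simp only [XLevel, if_true, Set.mem_singleton_iff] at h
    subst h
    intro j hj
    simp at hj
  · simp only [XLevel, hm.ne', if_false, Set.mem_ofPred_eq] at h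
    exact h.1

theorem prodR_le_of_mem_XLevel {w : List ℕ} {m : ℕ} (h : w ∈ XLevel n r R m) :
    prodR r w.length ≤ R ^ m := by
  rcases Nat.eq_zero_or_pos m with rfl | hm
  · simp only [XLevel, if_true, Set.mem_singleton_iff] at h
    simp [h, prodR]
  · simp only [XLevel, hm.ne', if_false, Set.mem_ofPred_eq] at h
    exact h.2.1

namespace MoranStructure

variable (M : MoranStructure d J n r)

theorem Jset_subset_of_prefix {w : List ℕ} (hw : IsWord n w) {v : List ℕ} (h : v <+: w) :
    M.Jset w ⊆ M.Jset v := by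
  induction w using List.reverseRecOn with
  | nil => rw [List.prefix_nil.mp h]
  | append_singleton w a ih =>
    rcases List.prefix_concat_iff.mp h with rfl | h
    · exact subset_rfl
    · have hw' := hw.of_prefix (List.prefix_append w [a])
      obtain ⟨ha₁, ha₂⟩ := hw.last_bounds
      exact (M.nested w hw' a ha₁ ha₂).trans (ih hw' h)

theorem diam_Jset {w : List ℕ} (hw : IsWord n w) :
    diam (M.Jset w) = prodR r w.length * diam J := by
  induction w using List.reverseRecOn with
  | nil => simp [M.root_eq, prodR]
  | append_singleton w a ih =>
    have hw' := hw.of_prefix (List.prefix_append w [a])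
    obtain ⟨ha₁, ha₂⟩ := hw.last_bounds
    rw [M.diam_ratio w hw' a ha₁ ha₂, ih hw', List.length_append, List.length_singleton,
      prodR, prodR, Finset.prod_range_succ]
    ring

theorem Jset_nonempty (hD : MoranData d J n r R) {w : List ℕ} (hw : IsWord n w) :
    (M.Jset w).Nonempty := by
  obtain ⟨S, -, -, -, hS⟩ := M.similar w hw
  exact hS ▸ (hD.int_nonempty.mono interior_subset).image S

theorem dist_le_of_mem_Jset (hD : MoranData d J n r R) {w : List ℕ} {m : ℕ}
    (hw : w ∈ XLevel n r R m) {x y : Pt d} (hx : x ∈ M.Jset w) (hy : y ∈ M.Jset w) :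
    dist x y ≤ diam J * R ^ m := by
  have hword := isWord_of_mem_XLevel hw
  have hsub : M.Jset w ⊆ J := M.root_eq.subst (M.Jset_subset_of_prefix hword w.nil_prefix)
  calc dist x y ≤ diam (M.Jset w) := dist_le_diam_of_mem (hD.compact.isBounded.subset hsub) hx hy
    _ = prodR r w.length * diam J := M.diam_Jset hword
    _ ≤ diam J * R ^ m := by
      rw [mul_comm]; exact mul_le_mul_of_nonneg_left (prodR_le_of_mem_XLevel hw) diam_nonneg

end MoranStructure

/-- Junk value `0` off `X`. -/
noncomputable def level (n : ℕ → ℕ) (r : ℕ → ℝ) (R : ℝ) (w : List ℕ) : ℕ :=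
  if h : ∃ m, w ∈ XLevel n r R m then Nat.find h else 0

theorem level_eq (hD : MoranData d J n r R) {w : List ℕ} {m : ℕ} (h : w ∈ XLevel n r R m) :
    level n r R w = m := by
  have hex : ∃ m, w ∈ XLevel n r R m := ⟨m, h⟩
  rw [level, dif_pos hex]
  exact hD.eq_of_mem_XLevel (Nat.find_spec hex) h

theorem mem_XLevel_level {w : List ℕ} (h : w ∈ XV n r R) :
    w ∈ XLevel n r R (level n r R w) := by
  have hex : ∃ m, w ∈ XLevel n r R m := Set.mem_iUnion.1 h
  rw [level, dif_pos hex]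
  exact Nat.find_spec hex

section AugGraph

variable {M : MoranStructure d J n r} {a b : List ℕ}

theorem exists_levels_of_adj (h : (AugGraph M R).Adj a b) :
    ∃ m m', a ∈ XLevel n r R m ∧ b ∈ XLevel n r R m' ∧ m' ≤ m + 1 := by
  rcases h with (⟨-, -, m, -, hb, ha⟩ | ⟨-, -, m, -, ha, hb⟩) | ⟨-, m, -, ha, hb, -⟩
  · exact ⟨m - 1, m, ha, hb, by omega⟩
  · exact ⟨m, m - 1, ha, hb, by omega⟩
  · exact ⟨m, m, ha, hb, by omega⟩

theorem mem_XV_of_adj (h : (AugGraph M R).Adj a b) : a ∈ XV n r R :=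
  let ⟨m, _, ha, _⟩ := exists_levels_of_adj h
  Set.mem_iUnion.2 ⟨m, ha⟩

theorem level_le_level_add_one (hD : MoranData d J n r R) (h : (AugGraph M R).Adj a b) :
    level n r R b ≤ level n r R a + 1 := by
  obtain ⟨m, m', ha, hb, hmm'⟩ := exists_levels_of_adj h
  rwa [level_eq hD ha, level_eq hD hb]

theorem Jset_inter_nonempty_of_adj (hD : MoranData d J n r R) (h : (AugGraph M R).Adj a b) :
    (M.Jset a ∩ M.Jset b).Nonempty := by
  rcases h with (⟨-, hpre, m, -, hb, -⟩ | ⟨-, hpre, m, -, ha, -⟩) | ⟨-, -, -, -, -, hab⟩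
  · have hb := isWord_of_mem_XLevel hb
    obtain ⟨z, hz⟩ := M.Jset_nonempty hD hb
    exact ⟨z, M.Jset_subset_of_prefix hb hpre hz, hz⟩
  · have ha := isWord_of_mem_XLevel ha
    obtain ⟨z, hz⟩ := M.Jset_nonempty hD ha
    exact ⟨z, hz, M.Jset_subset_of_prefix ha hpre hz⟩
  · exact hab

theorem dist_le_of_walk (hD : MoranData d J n r R) (W : (AugGraph M R).Walk a b)
    (ha : a ∈ XV n r R) {x y : Pt d} (hx : x ∈ M.Jset a) (hy : y ∈ M.Jset b) :
    (1 - R) * dist x y ≤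
      2 * diam J * R ^ (((level n r R a : ℝ) + level n r R b - W.length) / 2) := by
  have := dist_le_of_walk_of_pieces hD.R_pos hD.R_lt_one diam_nonneg
    (fun _ _ h => level_le_level_add_one hD h) (fun _ _ h => mem_XV_of_adj h)
    (fun _ _ h => Jset_inter_nonempty_of_adj hD h)
    (fun w hw x hx y hy => M.dist_le_of_mem_Jset hD (mem_XLevel_level hw) hx hy) W ha hx hy
  linarith [mul_nonneg (diam_nonneg (s := J)) (pow_pos hD.R_pos (level n r R a)).le]

end AugGraph

namespace IsRay

variable (M : MoranStructure d J n r) {u v : ℕ → List ℕ}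

open SimpleGraph

theorem zero (hu : IsRay n r R u) : u 0 = [] := by simpa [XLevel] using hu.1 0

theorem adj (hu : IsRay n r R u) (m : ℕ) : (AugGraph M R).Adj (u (m + 1)) (u m) :=
  Or.inl (Or.inr (hu.2 m))

theorem exists_walk (hu : IsRay n r R u) {k m : ℕ} (hkm : k ≤ m) :
    ∃ W : (AugGraph M R).Walk (u m) (u k), W.length = m - k := by
  induction m, hkm using Nat.le_induction with
  | base => exact ⟨.nil, by simp⟩
  | succ m hkm ih =>
    obtain ⟨W, hW⟩ := ih
    exact ⟨.cons (hu.adj M m) W, by rw [Walk.length_cons, hW]; omega⟩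

theorem dist_le (hu : IsRay n r R u) {k m : ℕ} (hkm : k ≤ m) :
    (AugGraph M R).dist (u m) (u k) ≤ m - k :=
  let ⟨W, hW⟩ := hu.exists_walk M hkm
  hW ▸ SimpleGraph.dist_le W

theorem reachable (hu : IsRay n r R u) (hv : IsRay n r R v) (m k : ℕ) :
    (AugGraph M R).Reachable (u m) (v k) := by
  obtain ⟨Wu, -⟩ := hu.exists_walk M (Nat.zero_le m)
  obtain ⟨Wv, -⟩ := hv.exists_walk M (Nat.zero_le k)
  exact ⟨Wu.append (Wv.reverse.copy (hv.zero.trans hu.zero.symm) rfl)⟩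

theorem dist_nil (hD : MoranData d J n r R) (hu : IsRay n r R u) (m : ℕ) :
    (AugGraph M R).dist [] (u m) = m := by
  refine le_antisymm ?_ ?_
  · simpa [dist_comm, hu.zero] using hu.dist_le M (Nat.zero_le m)
  · obtain ⟨W, hW⟩ := (hu.zero ▸ hu.reachable M hu 0 m : (AugGraph M R).Reachable [] (u m))
      |>.exists_walk_length_eq_dist
    have := W.lev_le_add_length fun _ _ h => level_le_level_add_one hD h
    rwa [level_eq hD (hu.1 m), level_eq hD (hu.zero ▸ hu.1 0), hW, zero_add] at this

theorem dist_le_dist_add (hu : IsRay n r R u) (hv : IsRay n r R v) {k m : ℕ} (hkm : k ≤ m) :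
    (AugGraph M R).dist (u m) (v m) ≤ (AugGraph M R).dist (u k) (v k) + 2 * (m - k) := by
  have h₁ := (hu.reachable M hu m k).dist_triangle_left (v m)
  have h₂ := (hu.reachable M hv k k).dist_triangle_left (v m)
  have h₃ := hu.dist_le M hkm
  have h₄ := hv.dist_le M hkm
  rw [dist_comm (u := v k)] at h₂
  omega

theorem gromovD_eq (hD : MoranData d J n r R) (hu : IsRay n r R u) (hv : IsRay n r R v)
    (m : ℕ) :
    gromovD (AugGraph M R) [] (u m) (v m) = m - (AugGraph M R).dist (u m) (v m) / 2 := by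
  rw [gromovD, hu.dist_nil M hD, hv.dist_nil M hD]
  ring

theorem dist_le_rpow_gromovD (hD : MoranData d J n r R) (hu : IsRay n r R u)
    (hv : IsRay n r R v) {m : ℕ} {x y : Pt d} (hx : x ∈ M.Jset (u m))
    (hy : y ∈ M.Jset (v m)) :
    (1 - R) * dist x y ≤ 2 * diam J * R ^ gromovD (AugGraph M R) [] (u m) (v m) := by
  obtain ⟨W, hW⟩ := (hu.reachable M hv m m).exists_walk_length_eq_dist
  convert dist_le_of_walk hD W (Set.mem_iUnion.2 ⟨m, hu.1 m⟩) hx hy using 3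
  rw [hu.gromovD_eq M hD hv, level_eq hD (hu.1 m), level_eq hD (hv.1 m), hW]
  ring

theorem exists_separation_level (hD : MoranData d J n r R) (hu : IsRay n r R u)
    (hv : IsRay n r R v) {β : ℝ} (hβ : ∀ m, gromovD (AugGraph M R) [] (u m) (v m) ≤ β) :
    ∃ s, 1 ≤ s ∧ 2 ≤ (AugGraph M R).dist (u s) (v s) ∧
      ∀ m, s - 1 ≤ m → (s : ℝ) - 3 / 2 ≤ gromovD (AugGraph M R) [] (u m) (v m) := by
  have hsep : ∃ s, 2 ≤ (AugGraph M R).dist (u s) (v s) := by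
    obtain ⟨s, hs⟩ := exists_nat_gt (β + 1)
    refine ⟨s, ?_⟩
    by_contra! h
    have hd : ((AugGraph M R).dist (u s) (v s) : ℝ) ≤ 1 := by exact_mod_cast Nat.le_of_lt_succ h
    have := hβ s
    rw [hu.gromovD_eq M hD hv] at this
    linarith
  have hs : Nat.find hsep ≠ 0 := by
    intro h0
    have := Nat.find_spec hsep
    rw [h0, hu.zero, hv.zero, SimpleGraph.dist_self] at this
    omega
  refine ⟨Nat.find hsep, Nat.one_le_iff_ne_zero.2 hs, Nat.find_spec hsep, fun m hm => ?_⟩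
  have hprev := Nat.find_min hsep (Nat.sub_one_lt hs)
  have hd := hu.dist_le_dist_add M hv hm
  have hd' : (AugGraph M R).dist (u m) (v m) + 2 * Nat.find hsep ≤ 2 * m + 3 := by omega
  have hd'' : ((AugGraph M R).dist (u m) (v m) : ℝ) + 2 * Nat.find hsep ≤ 2 * m + 3 := by
    exact_mod_cast hd'
  rw [hu.gromovD_eq M hD hv]
  linarith

theorem not_Jset_inter_nonempty_of_two_le_dist (hu : IsRay n r R u) (hv : IsRay n r R v)
    {s : ℕ} (hs : 1 ≤ s) (h : 2 ≤ (AugGraph M R).dist (u s) (v s)) :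
    ¬(M.Jset (u s) ∩ M.Jset (v s)).Nonempty := by
  intro hne
  by_cases heq : u s = v s
  · rw [heq, SimpleGraph.dist_self] at h
    omega
  · have hadj : (AugGraph M R).Adj (u s) (v s) := Or.inr ⟨heq, s, hs, hu.1 s, hv.1 s, hne⟩
    rw [SimpleGraph.dist_eq_one_iff_adj.2 hadj] at h
    omega

theorem exists_tLim_eq (hD : MoranData d J n r R) {C' : ℝ} (hC' : 0 < C')
    (hH : ∀ m, 1 ≤ m → ∀ a ∈ XLevel n r R m, ∀ b ∈ XLevel n r R m,
      (M.Jset a ∩ M.Jset b).Nonempty ∨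
        ∀ p ∈ M.Jset a, ∀ q ∈ M.Jset b, C' * R ^ m ≤ dist p q)
    (hu : IsRay n r R u) (hv : IsRay n r R v) {x y : Pt d} (hx : ∀ m, x ∈ M.Jset (u m))
    (hy : ∀ m, y ∈ M.Jset (v m)) (hxy : x ≠ y) :
    ∃ τ : ℝ, tLim (AugGraph M R) [] u v = τ ∧ dist x y ≤ 2 * diam J / (1 - R) * R ^ τ ∧
      R ^ τ ≤ (C' * R ^ (3 / 2 : ℝ))⁻¹ * dist x y := by
  have hR0 := hD.R_pos
  have hR1 := hD.R_lt_one
  have hbound m := hu.dist_le_rpow_gromovD M hD hv (hx m) (hy m)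
  have hxy' : 0 < (1 - R) * dist x y := mul_pos (by linarith) (dist_pos.2 hxy)
  have hK : 0 < 2 * diam J := pos_of_mul_pos_left (hxy'.trans_le (hbound 0)) (by positivity)
  have hβ m : gromovD (AugGraph M R) [] (u m) (v m) ≤
      Real.logb R ((1 - R) * dist x y / (2 * diam J)) :=
    (Real.le_logb_iff_rpow_le_of_base_lt_one hR0 hR1 (div_pos hxy' hK)).2
      ((div_le_iff₀' hK).2 (hbound m))
  obtain ⟨s, hs, hs2, hlow⟩ := hu.exists_separation_level M hD hv hβ
  obtain ⟨τ, hτ, hsτ, hτβ⟩ :=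
    EReal.exists_liminf_coe_eq hβ (eventually_atTop.2 ⟨s - 1, hlow⟩)
  refine ⟨τ, hτ, ?_, ?_⟩
  · have := Real.rpow_le_rpow_of_exponent_ge hR0 hR1.le hτβ
    rw [Real.rpow_logb hR0 hR1.ne (div_pos hxy' hK), div_le_iff₀' hK] at this
    rw [div_mul_eq_mul_div, le_div_iff₀ (by linarith)]
    linarith
  · have hfar := ((hH s hs _ (hu.1 s) _ (hv.1 s)).resolve_left
      (hu.not_Jset_inter_nonempty_of_two_le_dist M hv hs hs2)) x (hx s) y (hy s)
    have hτs : R ^ (τ + 3 / 2) ≤ R ^ s := by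
      rw [← Real.rpow_natCast]; exact Real.rpow_le_rpow_of_exponent_ge hR0 hR1.le (by linarith)
    rw [Real.rpow_add hR0] at hτs
    rw [inv_mul_eq_div, le_div_iff₀ (by positivity)]
    linarith [mul_le_mul_of_nonneg_left hτs hC'.le]

end IsRay

end MoranPaper

/-- under condition (H) there is `C > 0` with
`C⁻¹·|Φ(ξ) - Φ(η)| ≤ r^{t(ξ,η)} ≤ C·|Φ(ξ) - Φ(η)|` whenever `Φ(ξ) ≠ Φ(η)`. -/
theorem MoranPaper.statement9 (d : ℕ) (J : Set (MoranPaper.Pt d)) (n : ℕ → ℕ) (r : ℕ → ℝ)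
    (R : ℝ) (hD : MoranPaper.MoranData d J n r R) (M : MoranPaper.MoranStructure d J n r)
    (hH : MoranPaper.CondH M R) :
    ∃ C : ℝ, 0 < C ∧ ∀ u v : ℕ → List ℕ,
      MoranPaper.IsRay n r R u → MoranPaper.IsRay n r R v →
      ∀ x y : MoranPaper.Pt d,
        (⋂ m, M.Jset (u m)) = {x} → (⋂ m, M.Jset (v m)) = {y} → x ≠ y →
        C⁻¹ * dist x y
            ≤ MoranPaper.rpowE R (MoranPaper.tLim (MoranPaper.AugGraph M R) [] u v) ∧
        MoranPaper.rpowE R (MoranPaper.tLim (MoranPaper.AugGraph M R) [] u v)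
            ≤ C * dist x y := by
  obtain ⟨C', hC', hH⟩ := hH
  have hR0 := hD.R_pos
  refine ⟨max (2 * diam J / (1 - R)) (C' * R ^ (3 / 2 : ℝ))⁻¹,
    lt_max_of_lt_right (by positivity), ?_⟩
  intro u v hu hv x y hxu hyv hxy
  have hx : ∀ m, x ∈ M.Jset (u m) := Set.mem_iInter.1 (hxu ▸ Set.mem_singleton x)
  have hy : ∀ m, y ∈ M.Jset (v m) := Set.mem_iInter.1 (hyv ▸ Set.mem_singleton y)
  obtain ⟨τ, hτ, hlow, hup⟩ := hu.exists_tLim_eq M hD hC' hH hv hx hy hxy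
  have hdist := dist_pos.2 hxy
  have hK : 0 < 2 * diam J / (1 - R) :=
    pos_of_mul_pos_left (hdist.trans_le hlow) (Real.rpow_pos_of_pos hR0 τ).le
  rw [hτ, MoranPaper.rpowE, if_neg (EReal.coe_ne_top τ), EReal.toReal_coe]
  constructor
  · calc _ ≤ (2 * diam J / (1 - R))⁻¹ * dist x y := by gcongr; exact le_max_left _ _
      _ ≤ R ^ τ := by rwa [inv_mul_eq_div, div_le_iff₀' hK]
  · exact hup.trans (by gcongr; exact le_max_right _ _)
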